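/- (Lemma 3) In the limit κ → ∞ the soft-minima become minima, and the function ĥ∞ : ℝ → ℝ defined by ĥ∞(x) = min_{a∈A_i} ⟨−û_i, Ξ(a)⟩ + min_{b∈B_j} ⟨−v̂_j, Ξ(b)⟩ (as a function of the single coordinate x = û_{i,j}^{(r)}, with v̂_{j,i}^{(r)} = −x and all other entries fixed) is maximized by every value x lying in the closed interval between (V̄∞ − V∞) and −(C̄∞ − C∞), where V̄∞ = −min_{a∈A_i, a_j≠r} ⟨−û_i, Ξ(a)⟩, V∞ = −min_{a∈A_i, a_j=r} ⟨−ũ_i, Ξ(ã)⟩, C̄∞ = −min_{b∈B_j, b_i≠r} ⟨−v̂_j, Ξ(b)⟩, and C∞ = −min_{b∈B_j, b_i=r} ⟨−ṽ_j, Ξ(b̃)⟩; that is, for every such x and every y ∈ ℝ, ĥ∞(y) ≤ ĥ∞(x). -/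

import Mathlib

attribute [local instance] Classical.propDecidable

noncomputable section

variable {R : Type*}

/-- `ξ(r) ∈ ℝ^{q−1}`, indexed by the nonzero ring elements. -/
def xi [Ring R] (r : R) : {ρ : R // ρ ≠ 0} → ℝ :=
  fun ρ => if (ρ : R) = r then 1 else 0

/-- `I_j`, the support of the `j`-th row of `H`. -/
abbrev Isupp [Ring R] {m n : ℕ} (H : Matrix (Fin m) (Fin n) R) (j : Fin m) :=
  {i : Fin n // H j i ≠ 0}

/-- `J_i`, the support of the `i`-th column of `H`. -/
abbrev Jsupp [Ring R] {m n : ℕ} (H : Matrix (Fin m) (Fin n) R) (i : Fin n) :=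
  {j : Fin m // H j i ≠ 0}

/-- The local single parity-check code `B_j = {(b_i)_{i∈I_j} : ∑_{i∈I_j} b_i·H_{j,i} = 0}`. -/
abbrev Bcode [Ring R] [Fintype R] {m n : ℕ} (H : Matrix (Fin m) (Fin n) R) (j : Fin m) :=
  {b : Isupp H j → R // (∑ i, b i * H j i.val) = 0}

/-- The repetition code `A_i` of constant tuples indexed by `{0} ∪ J_i`. -/
abbrev Acode [Ring R] {m n : ℕ} (H : Matrix (Fin m) (Fin n) R) (i : Fin n) :=
  {a : Option (Jsupp H i) → R // ∀ k k', a k = a k'}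

/-- The minimum of a (finite, nonempty) family of reals, as an infimum. -/
def fmin {L : Sort*} (z : L → ℝ) : ℝ := ⨅ l, z l

/-- The inner product `⟨u, Ξ(c)⟩` of a block vector `u` with `Ξ` of a tuple `c`. -/
def ipXi [Ring R] [Fintype R] {ι : Type*} [Fintype ι]
    (u : ι → {ρ : R // ρ ≠ 0} → ℝ) (c : ι → R) : ℝ :=
  ∑ k, ∑ ρ, u k ρ * xi (c k) ρ

/-- The inner product `⟨u, Ξ(c)⟩` where the block/entry at position `k0` is omitted. -/
def ipXiE [Ring R] [Fintype R] {ι : Type*} [Fintype ι] [DecidableEq ι]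
    (u : ι → {ρ : R // ρ ≠ 0} → ℝ) (c : ι → R) (k0 : ι) : ℝ :=
  ∑ k ∈ Finset.univ.erase k0, ∑ ρ, u k ρ * xi (c k) ρ

/-- The block vector `û_i` in which the single coordinate `û_{i,j}^{(r)}` is replaced by `x`. -/
def uX [Ring R] {m n : ℕ} {H : Matrix (Fin m) (Fin n) R} {i : Fin n}
    (uh : Option (Jsupp H i) → {ρ : R // ρ ≠ 0} → ℝ) (jh : Jsupp H i) (r : R) (x : ℝ) :
    Option (Jsupp H i) → {ρ : R // ρ ≠ 0} → ℝ :=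
  fun k ρ => if k = some jh ∧ (ρ : R) = r then x else uh k ρ

/-- The block vector `v̂_j` in which the single coordinate `v̂_{j,i}^{(r)}` is replaced by `−x`. -/
def vX [Ring R] {m n : ℕ} {H : Matrix (Fin m) (Fin n) R} {j : Fin m}
    (vh : Isupp H j → {ρ : R // ρ ≠ 0} → ℝ) (ih : Isupp H j) (r : R) (x : ℝ) :
    Isupp H j → {ρ : R // ρ ≠ 0} → ℝ :=
  fun k ρ => if k = ih ∧ (ρ : R) = r then -x else vh k ρ

/-- `ĥ∞(x) = min_{a∈A_i} ⟨−û_i, Ξ(a)⟩ + min_{b∈B_j} ⟨−v̂_j, Ξ(b)⟩`, as a function of the single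
coordinate `x = û_{i,j}^{(r)}` (with `v̂_{j,i}^{(r)} = −x`, all other entries fixed). -/
def hhatInf [Ring R] [Fintype R] {m n : ℕ} (H : Matrix (Fin m) (Fin n) R)
    (j : Fin m) (i : Fin n) (hij : H j i ≠ 0) (r : R)
    (uh : Option (Jsupp H i) → {ρ : R // ρ ≠ 0} → ℝ)
    (vh : Isupp H j → {ρ : R // ρ ≠ 0} → ℝ) (x : ℝ) : ℝ :=
  fmin (fun a : Acode H i => ipXi (fun k ρ => -(uX uh ⟨j, hij⟩ r x k ρ)) a.val)
    + fmin (fun b : Bcode H j => ipXi (fun k ρ => -(vX vh ⟨i, hij⟩ r x k ρ)) b.val)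

/-- `V̄∞ = −min_{a∈A_i, a_j≠r} ⟨−û_i, Ξ(a)⟩` (independent of the coordinate `x`). -/
def VbarInf [Ring R] [Fintype R] {m n : ℕ} (H : Matrix (Fin m) (Fin n) R)
    (j : Fin m) (i : Fin n) (hij : H j i ≠ 0) (r : R)
    (uh : Option (Jsupp H i) → {ρ : R // ρ ≠ 0} → ℝ) : ℝ :=
  -(fmin (fun a : {a : Acode H i // a.val (some ⟨j, hij⟩) ≠ r} =>
      ipXi (fun k ρ => -(uh k ρ)) a.val.val))

/-- `V∞ = −min_{a∈A_i, a_j=r} ⟨−ũ_i, Ξ(ã)⟩`, the `j`-th block/entry being omitted. -/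
def VsmInf [Ring R] [Fintype R] {m n : ℕ} (H : Matrix (Fin m) (Fin n) R)
    (j : Fin m) (i : Fin n) (hij : H j i ≠ 0) (r : R)
    (uh : Option (Jsupp H i) → {ρ : R // ρ ≠ 0} → ℝ) : ℝ :=
  -(fmin (fun a : {a : Acode H i // a.val (some ⟨j, hij⟩) = r} =>
      ipXiE (fun k ρ => -(uh k ρ)) a.val.val (some ⟨j, hij⟩)))

/-- `C̄∞ = −min_{b∈B_j, b_i≠r} ⟨−v̂_j, Ξ(b)⟩` (independent of the coordinate `x`). -/
def CbarInf [Ring R] [Fintype R] {m n : ℕ} (H : Matrix (Fin m) (Fin n) R)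
    (j : Fin m) (i : Fin n) (hij : H j i ≠ 0) (r : R)
    (vh : Isupp H j → {ρ : R // ρ ≠ 0} → ℝ) : ℝ :=
  -(fmin (fun b : {b : Bcode H j // b.val ⟨i, hij⟩ ≠ r} =>
      ipXi (fun k ρ => -(vh k ρ)) b.val.val))

/-- `C∞ = −min_{b∈B_j, b_i=r} ⟨−ṽ_j, Ξ(b̃)⟩`, the `i`-th block/entry being omitted. -/
def CsmInf [Ring R] [Fintype R] {m n : ℕ} (H : Matrix (Fin m) (Fin n) R)
    (j : Fin m) (i : Fin n) (hij : H j i ≠ 0) (r : R)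
    (vh : Isupp H j → {ρ : R // ρ ≠ 0} → ℝ) : ℝ :=
  -(fmin (fun b : {b : Bcode H j // b.val ⟨i, hij⟩ = r} =>
      ipXiE (fun k ρ => -(vh k ρ)) b.val.val ⟨i, hij⟩))

/-!
Only the tuples with `a_j = r` (resp. `b_i = r`) see the coordinate `x`, and each of them gains
exactly the summand `-x` (resp. `+x`). Splitting both minima along that condition gives
`ĥ∞(x) = min (-x - V∞) (-V̄∞) + min (x - C∞) (-C̄∞)`, a concave piecewise-linear function
whose maximum is attained exactly on the interval between the two breakpoints.
-/

lemma fmin_le {L : Sort*} [Finite L] (z : L → ℝ) (l : L) : fmin z ≤ z l :=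
  ciInf_le (Set.finite_range z).bddBelow l

lemma le_fmin {L : Sort*} [Nonempty L] {z : L → ℝ} {c : ℝ} (h : ∀ l, c ≤ z l) : c ≤ fmin z :=
  le_ciInf h

lemma fmin_const_add {L : Sort*} [Finite L] [Nonempty L] (c : ℝ) (z : L → ℝ) :
    fmin (fun l => c + z l) = c + fmin z :=
  ((OrderIso.addLeft c).map_ciInf (Set.finite_range z).bddBelow).symm

lemma fmin_eq_min_fmin_subtype {L : Type*} [Finite L] (z : L → ℝ) (P : L → Prop)
    [Nonempty {l // P l}] [Nonempty {l // ¬ P l}] :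
    fmin z = min (fmin fun l : {l // P l} => z l) (fmin fun l : {l // ¬ P l} => z l) := by
  have : Nonempty L := ⟨(Classical.arbitrary {l // P l}).val⟩
  refine le_antisymm (le_min (le_fmin fun l => fmin_le z l) (le_fmin fun l => fmin_le z l))
    (le_fmin fun l => ?_)
  by_cases hP : P l
  · exact (min_le_left _ _).trans (fmin_le (fun l : {l // P l} => z l) ⟨l, hP⟩)
  · exact (min_le_right _ _).trans (fmin_le (fun l : {l // ¬ P l} => z l) ⟨l, hP⟩)

section ipXi

variable [Ring R] [Fintype R] {ι : Type*} [Fintype ι] [DecidableEq ι]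

lemma sum_mul_xi (f : {ρ : R // ρ ≠ 0} → ℝ) {r : R} (hr : r ≠ 0) :
    ∑ ρ, f ρ * xi r ρ = f ⟨r, hr⟩ := by
  rw [Finset.sum_eq_single_of_mem _ (Finset.mem_univ ⟨r, hr⟩) fun ρ _ hρ => by
    rw [xi, if_neg fun h => hρ (Subtype.ext h), mul_zero]]
  simp [xi]

variable {u w : ι → {ρ : R // ρ ≠ 0} → ℝ} {k₀ : ι} {r : R}

lemma ipXi_eq_add_ipXiE_of_apply_eq
    (hw : ∀ k (ρ : {ρ : R // ρ ≠ 0}), ¬(k = k₀ ∧ (ρ : R) = r) → w k ρ = u k ρ)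
    (hr : r ≠ 0) {c : ι → R} (hc : c k₀ = r) :
    ipXi w c = w k₀ ⟨r, hr⟩ + ipXiE u c k₀ := by
  rw [ipXi, ← Finset.add_sum_erase _ _ (Finset.mem_univ k₀), hc, sum_mul_xi _ hr, ipXiE]
  refine congrArg _ (Finset.sum_congr rfl fun k hk => Finset.sum_congr rfl fun ρ _ => ?_)
  rw [hw k ρ fun h => (Finset.mem_erase.mp hk).1 h.1]

lemma ipXi_eq_of_apply_ne
    (hw : ∀ k (ρ : {ρ : R // ρ ≠ 0}), ¬(k = k₀ ∧ (ρ : R) = r) → w k ρ = u k ρ)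
    {c : ι → R} (hc : c k₀ ≠ r) :
    ipXi w c = ipXi u c := by
  refine Finset.sum_congr rfl fun k _ => Finset.sum_congr rfl fun ρ _ => ?_
  by_cases h : k = k₀ ∧ (ρ : R) = r
  · obtain ⟨rfl, hρ⟩ := h
    rw [xi, if_neg (hρ ▸ Ne.symm hc), mul_zero, mul_zero]
  · rw [hw k ρ h]

lemma fmin_ipXi_eq_min
    (hw : ∀ k (ρ : {ρ : R // ρ ≠ 0}), ¬(k = k₀ ∧ (ρ : R) = r) → w k ρ = u k ρ) (hr : r ≠ 0)
    {L : Type*} [Finite L] (c : L → ι → R)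
    [Nonempty {l // c l k₀ = r}] [Nonempty {l // c l k₀ ≠ r}] :
    fmin (fun l => ipXi w (c l)) =
      min (w k₀ ⟨r, hr⟩ + fmin fun l : {l // c l k₀ = r} => ipXiE u (c l) k₀)
        (fmin fun l : {l // c l k₀ ≠ r} => ipXi u (c l)) := by
  rw [fmin_eq_min_fmin_subtype _ fun l => c l k₀ = r, ← fmin_const_add]
  congr 2 <;> funext l
  · exact ipXi_eq_add_ipXiE_of_apply_eq hw hr l.2
  · exact ipXi_eq_of_apply_ne hw l.2

end ipXi

lemma hhatInf_eq [Ring R] [Fintype R] {m n : ℕ} (H : Matrix (Fin m) (Fin n) R)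
    (j : Fin m) (i : Fin n) (hij : H j i ≠ 0) {r : R} (hr : r ≠ 0)
    (uh : Option (Jsupp H i) → {ρ : R // ρ ≠ 0} → ℝ)
    (vh : Isupp H j → {ρ : R // ρ ≠ 0} → ℝ)
    [Nonempty {b : Bcode H j // b.val ⟨i, hij⟩ = r}]
    [Nonempty {b : Bcode H j // b.val ⟨i, hij⟩ ≠ r}] (x : ℝ) :
    hhatInf H j i hij r uh vh x =
      min (-x - VsmInf H j i hij r uh) (-VbarInf H j i hij r uh)
        + min (x - CsmInf H j i hij r vh) (-CbarInf H j i hij r vh) := by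
  have : Nonempty {a : Acode H i // a.val (some ⟨j, hij⟩) = r} :=
    ⟨⟨⟨fun _ => r, fun _ _ => rfl⟩, rfl⟩⟩
  have : Nonempty {a : Acode H i // a.val (some ⟨j, hij⟩) ≠ r} :=
    ⟨⟨⟨fun _ => 0, fun _ _ => rfl⟩, hr.symm⟩⟩
  rw [hhatInf,
    fmin_ipXi_eq_min (u := fun k ρ => -uh k ρ) (k₀ := some ⟨j, hij⟩)
      (fun k ρ h => by simp only [uX, if_neg h]) hr Subtype.val,
    fmin_ipXi_eq_min (u := fun k ρ => -vh k ρ) (k₀ := ⟨i, hij⟩)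
      (fun k ρ h => by simp only [vX, if_neg h]) hr Subtype.val]
  simp only [uX, vX, VsmInf, VbarInf, CsmInf, CbarInf, and_self, if_true, neg_neg]
  ring_nf

/-- Pairing the first, resp. second, arguments of the two minima bounds the left side by
`-v - c` and by `-V - C`; on the interval one of these bounds is attained at `x`. -/
lemma min_add_min_le_of_mem_uIcc {V v C c x : ℝ} (hx : x ∈ Set.uIcc (V - v) (-(C - c)))
    (y : ℝ) : min (-y - v) (-V) + min (y - c) (-C) ≤ min (-x - v) (-V) + min (x - c) (-C) := by
  rcases Set.mem_uIcc.mp hx with ⟨h₁, h₂⟩ | ⟨h₁, h₂⟩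
  · rw [min_eq_left (by linarith : -x - v ≤ -V), min_eq_left (by linarith : x - c ≤ -C)]
    linarith [min_le_left (-y - v) (-V), min_le_left (y - c) (-C)]
  · rw [min_eq_right (by linarith : -V ≤ -x - v), min_eq_right (by linarith : -C ≤ x - c)]
    linarith [min_le_right (-y - v) (-V), min_le_right (y - c) (-C)]

theorem hhatInf_max_interval_general [Ring R] [Fintype R] {m n : ℕ} (H : Matrix (Fin m) (Fin n) R)
    (j : Fin m) (i : Fin n) (hij : H j i ≠ 0) (r : R) (hr : r ≠ 0)
    (uh : Option (Jsupp H i) → {ρ : R // ρ ≠ 0} → ℝ)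
    (vh : Isupp H j → {ρ : R // ρ ≠ 0} → ℝ)
    (hB1 : Nonempty {b : Bcode H j // b.val ⟨i, hij⟩ = r})
    (hB2 : Nonempty {b : Bcode H j // b.val ⟨i, hij⟩ ≠ r}) :
    ∀ x ∈ Set.uIcc (VbarInf H j i hij r uh - VsmInf H j i hij r uh)
        (-(CbarInf H j i hij r vh - CsmInf H j i hij r vh)),
      ∀ y : ℝ, hhatInf H j i hij r uh vh y ≤ hhatInf H j i hij r uh vh x := by
  intro x hx y
  rw [hhatInf_eq H j i hij hr uh vh x, hhatInf_eq H j i hij hr uh vh y]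
  exact min_add_min_le_of_mem_uIcc hx y

/-- (Lemma 3) In the limit `κ → ∞`, the function `ĥ∞` is maximized by every value `x` lying in
the closed interval between `V̄∞ − V∞` and `−(C̄∞ − C∞)`. -/
theorem hhatInf_max_interval [Ring R] [Fintype R] [DecidableEq R]
    (hq : 2 ≤ Fintype.card R) {m n : ℕ} (H : Matrix (Fin m) (Fin n) R)
    (j : Fin m) (i : Fin n) (hij : H j i ≠ 0) (r : R) (hr : r ≠ 0)
    (uh : Option (Jsupp H i) → {ρ : R // ρ ≠ 0} → ℝ)
    (vh : Isupp H j → {ρ : R // ρ ≠ 0} → ℝ)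
    (hcouple : ∀ ρ, uh (some ⟨j, hij⟩) ρ = -(vh ⟨i, hij⟩ ρ))
    (hB1 : Nonempty {b : Bcode H j // b.val ⟨i, hij⟩ = r})
    (hB2 : Nonempty {b : Bcode H j // b.val ⟨i, hij⟩ ≠ r}) :
    ∀ x ∈ Set.uIcc (VbarInf H j i hij r uh - VsmInf H j i hij r uh)
        (-(CbarInf H j i hij r vh - CsmInf H j i hij r vh)),
      ∀ y : ℝ, hhatInf H j i hij r uh vh y ≤ hhatInf H j i hij r uh vh x :=
  hhatInf_max_interval_general H j i hij r hr uh vh hB1 hB2
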